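/- (Boundedness of the Dirichlet correction, discrete corollary.) Let α_D⁰, α_Dᵗ ∈ ℝ with α_D⁰ ≠ 0, let u₀ ∈ ℝᴺ satisfy u₀(0) = α_D⁰, set β = α_Dᵗ/α_D⁰, and let K_bdy = T¹_D(β) · K · T²_D. Then, with u = K·u₀ and ũ = K_bdy·u₀, the squared Euclidean norm of the difference satisfies the exact identity ‖u − ũ‖₂² = (u(0) − α_Dᵗ)² + (u(0) − K₀₀·u₀(0))² · (Σ_{i=0}^{N−1} K(i,0)²/K₀₀² − 1). -/

import Mathlib

open Matrix Finset

/-- The matrix `T¹_D(β)`: entry (0,0) is `β/K₀₀`, diagonal entries 1 for rows `i ≠ 0`,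
all other entries 0. -/
noncomputable def T1D {n : ℕ} (K : Matrix (Fin (n+2)) (Fin (n+2)) ℝ) (β : ℝ) :
    Matrix (Fin (n+2)) (Fin (n+2)) ℝ :=
  Matrix.of fun i j =>
    if i = 0 then (if j = 0 then β / K 0 0 else 0) else if i = j then 1 else 0

/-- The matrix `T²_D`: entry (0,0) is 1, entries (0,j) are `−K(0,j)/K₀₀` for `j ≠ 0`,
diagonal entries 1 for rows `i ≠ 0`, all other entries 0. -/
noncomputable def T2D {n : ℕ} (K : Matrix (Fin (n+2)) (Fin (n+2)) ℝ) :
    Matrix (Fin (n+2)) (Fin (n+2)) ℝ :=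
  Matrix.of fun i j =>
    if i = 0 then (if j = 0 then 1 else -K 0 j / K 0 0) else if i = j then 1 else 0

/-- boundedness of the Dirichlet correction, discrete corollary. -/
theorem dirichlet_correction_bounded {n : ℕ} (K : Matrix (Fin (n+2)) (Fin (n+2)) ℝ)
    (hK : K 0 0 ≠ 0) (αD0 αDt : ℝ) (hα : αD0 ≠ 0)
    (u₀ : Fin (n+2) → ℝ) (hu₀ : u₀ 0 = αD0)
    (β : ℝ) (hβ : β = αDt / αD0)
    (Kbdy : Matrix (Fin (n+2)) (Fin (n+2)) ℝ)
    (hKbdy : Kbdy = T1D K β * K * T2D K)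
    (u utilde : Fin (n+2) → ℝ)
    (hu : u = K.mulVec u₀) (hut : utilde = Kbdy.mulVec u₀) :
    ∑ i, (u i - utilde i) ^ 2 =
      (u 0 - αDt) ^ 2 +
        (u 0 - K 0 0 * u₀ 0) ^ 2 * ((∑ i, K i 0 ^ 2 / K 0 0 ^ 2) - 1) := by
  subst hβ hKbdy hu hut
  set v : Fin (n+2) → ℝ := (T2D K).mulVec u₀ with hv
  set w : Fin (n+2) → ℝ := K.mulVec v with hw
  have hnest : (T1D K (αDt / αD0) * K * T2D K).mulVec u₀
      = (T1D K (αDt / αD0)).mulVec w := by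
    rw [hw, hv, Matrix.mulVec_mulVec, Matrix.mulVec_mulVec]
  set S : ℝ := ∑ j : Fin (n+1), K 0 j.succ * u₀ j.succ with hS
  have hu0 : K.mulVec u₀ 0 = K 0 0 * u₀ 0 + S := by
    simp [Matrix.mulVec, dotProduct, Fin.sum_univ_succ, hS]
  have hv0 : v 0 = u₀ 0 - S / K 0 0 := by
    simp only [hv, Matrix.mulVec, dotProduct, T2D, Matrix.of_apply, if_pos rfl]
    rw [Fin.sum_univ_succ]
    simp only [if_pos rfl, Fin.succ_ne_zero, if_neg, ite_false]
    rw [hS, Finset.sum_div, sub_eq_add_neg, ← Finset.sum_neg_distrib]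
    congr 1
    · simp
    · apply Finset.sum_congr rfl
      intro j _
      simp only [Fin.succ_ne_zero j, ite_false, if_true, ite_true]
      field_simp
  have hvs : ∀ j : Fin (n+1), v j.succ = u₀ j.succ := by
    intro j
    simp [hv, Matrix.mulVec, dotProduct, T2D, Fin.succ_ne_zero j,
      Finset.sum_ite_eq, eq_comm]
  have hw' : ∀ i, w i = K.mulVec u₀ i - K i 0 / K 0 0 * S := by
    intro i
    simp only [hw, Matrix.mulVec, dotProduct]
    rw [Fin.sum_univ_succ, Fin.sum_univ_succ (f := fun j => K i j * u₀ j), hv0]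
    have : ∑ j : Fin (n+1), K i j.succ * v j.succ
        = ∑ j : Fin (n+1), K i j.succ * u₀ j.succ := by
      exact Finset.sum_congr rfl fun j _ => by rw [hvs j]
    rw [this]
    field_simp
    ring
  have hut0 : (T1D K (αDt / αD0)).mulVec w 0 = αDt := by
    simp only [Matrix.mulVec, dotProduct, T1D, Matrix.of_apply, if_pos rfl]
    rw [Fin.sum_univ_succ]
    simp only [if_pos rfl, Fin.succ_ne_zero, ite_false]
    have : w 0 = K 0 0 * u₀ 0 := by
      rw [hw' 0, hu0]; field_simp; ring
    rw [this]
    simp only [mul_zero, zero_mul, Finset.sum_const_zero, add_zero, hu₀]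
    field_simp
    simp only [ite_true, ite_false, zero_mul, Finset.sum_const_zero, add_zero]
    field_simp
  have huts : ∀ j : Fin (n+1), (T1D K (αDt / αD0)).mulVec w j.succ = w j.succ := by
    intro j
    simp [Matrix.mulVec, dotProduct, T1D, Fin.succ_ne_zero j,
      Finset.sum_ite_eq, eq_comm]
  rw [hnest]
  rw [Fin.sum_univ_succ]
  rw [hut0]
  have hterm : ∀ j : Fin (n+1),
      (K.mulVec u₀ j.succ - (T1D K (αDt / αD0)).mulVec w j.succ) ^ 2
        = (K.mulVec u₀ 0 - K 0 0 * u₀ 0) ^ 2 * (K j.succ 0 ^ 2 / K 0 0 ^ 2) := by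
    intro j
    rw [huts j, hw' j.succ, hu0]
    field_simp
    ring
  rw [Finset.sum_congr rfl fun j _ => hterm j, ← Finset.mul_sum]
  congr 1
  rw [Fin.sum_univ_succ (f := fun i => K i 0 ^ 2 / K 0 0 ^ 2)]
  rw [div_self (pow_ne_zero 2 hK)]
  ring
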